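/- Let C be a set of clusters on X with |X| = n >= 2. Then the incompatibility graph IG(C) has at most 4(n-1) connected components. -/

import Mathlib

/-!
Unions of distinct components of `IG(C)` are compatible, so these "backbone clusters" form a
laminar family on `X`. A component consisting of a single cluster `c` has union `c`, and two
nontrivial components with the same union coincide: every member of either one would lie strictly
inside a member of the other, which fails for a maximal member. So the trivial components inject
into a laminar family of nonempty sets (at most `2n - 1` members) and the nontrivial ones into a
laminar family of sets with at least two points (at most `n - 1` members), and
`3n - 2 ≤ 4(n - 1)`.
-/

def Compat {X : Type*} (A B : Set X) : Prop :=
  A ∩ B = ∅ ∨ A ⊆ B ∨ B ⊆ A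

def IGComponent {X : Type*} (C : Set (Set X)) (c : Set X) : Set (Set X) :=
  {d | d ∈ C ∧ Relation.ReflTransGen
        (fun a b => a ∈ C ∧ b ∈ C ∧ ¬ Compat a b) c d}

namespace Compat

variable {α : Type*} {A B : Set α}

theorem symm (h : Compat A B) : Compat B A := by
  rcases h with h | h | h
  · exact Or.inl (by rwa [Set.inter_comm])
  · exact Or.inr (Or.inr h)
  · exact Or.inr (Or.inl h)

theorem sdiff (h : Compat A B) (D : Set α) : Compat (A \ D) (B \ D) := by
  rcases h with h | h | h
  · exact Or.inl <| Set.subset_empty_iff.mp <|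
      h ▸ Set.inter_subset_inter Set.sdiff_subset Set.sdiff_subset
  · exact Or.inr (Or.inl (Set.sdiff_subset_sdiff_left h))
  · exact Or.inr (Or.inr (Set.sdiff_subset_sdiff_left h))

end Compat

theorem not_compat_iff {α : Type*} {A B : Set α} :
    ¬ Compat A B ↔ (A ∩ B).Nonempty ∧ ¬ A ⊆ B ∧ ¬ B ⊆ A := by
  simp only [Compat, not_or, Set.nonempty_iff_ne_empty]

section Laminar

variable {α : Type*} {L : Set (Set α)} {s M A : Set α}

theorem subset_of_pairwise_compat_of_minimal (hL : L.Pairwise Compat)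
    (hM : Minimal (· ∈ L) M) (hA : A ∈ L) (hAM : A ≠ M) (hAM' : (A ∩ M).Nonempty) :
    M ⊆ A := by
  rcases hL hA hM.prop hAM with h | h | h
  · exact absurd h hAM'.ne_empty
  · exact absurd (hM.eq_of_subset hA h) hAM
  · exact h

theorem injOn_sdiff_singleton_of_minimal (hL : L.Pairwise Compat) (hnt : ∀ A ∈ L, A.Nontrivial)
    (hM : Minimal (· ∈ L) M) {x : α} (hx : x ∈ M) :
    (L \ {M}).InjOn (· \ {x}) := by
  obtain ⟨y, hyM, hyx⟩ := (hnt M hM.prop).exists_ne x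
  have mixed : ∀ A ∈ L \ {M}, ∀ B ∈ L \ {M}, x ∈ A → A \ {x} = B \ {x} → x ∈ B := by
    rintro A ⟨hA, hAM⟩ B ⟨hB, hBM⟩ hxA hAB
    have hMA := subset_of_pairwise_compat_of_minimal hL hM hA hAM ⟨x, hxA, hx⟩
    have hyB : y ∈ B \ {x} := hAB ▸ ⟨hMA hyM, hyx⟩
    exact subset_of_pairwise_compat_of_minimal hL hM hB hBM ⟨y, hyB.1, hyM⟩ hx
  intro A hA B hB hAB
  simp only at hAB
  by_cases hxA : x ∈ A
  · have hxB := mixed A hA B hB hxA hAB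
    rw [← Set.insert_sdiff_self_of_mem hxA, hAB, Set.insert_sdiff_self_of_mem hxB]
  · have hxB : x ∉ B := fun hxB => hxA (mixed B hB A hA hxB hAB.symm)
    rwa [Set.sdiff_singleton_eq_self hxA, Set.sdiff_singleton_eq_self hxB] at hAB

theorem nontrivial_sdiff_singleton_of_minimal (hL : L.Pairwise Compat)
    (hnt : ∀ A ∈ L, A.Nontrivial) (hM : Minimal (· ∈ L) M) {x : α} (hx : x ∈ M)
    (hA : A ∈ L \ {M}) : (A \ {x}).Nontrivial := by
  by_cases hxA : x ∈ A
  · obtain ⟨y, hyM, hyx⟩ := (hnt M hM.prop).exists_ne x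
    have hMA := subset_of_pairwise_compat_of_minimal hL hM hA.1 hA.2 ⟨x, hxA, hx⟩
    obtain ⟨z, hzA, hzM⟩ := Set.exists_of_ssubset (hMA.ssubset_of_ne (Ne.symm hA.2))
    exact ⟨y, ⟨hMA hyM, hyx⟩, z, ⟨hzA, fun hzx => hzM (hzx ▸ hx)⟩, fun h => hzM (h ▸ hyM)⟩
  · rw [Set.sdiff_singleton_eq_self hxA]
    exact hnt A hA.1

theorem ncard_le_ncard_sub_one_of_pairwise_compat (hs : s.Finite) (hL : L.Pairwise Compat)
    (hsub : ∀ A ∈ L, A ⊆ s) (hnt : ∀ A ∈ L, A.Nontrivial) : L.ncard ≤ s.ncard - 1 := by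
  -- Delete `M` and a point `x ∈ M`, then recurse on `s \ {x}`.
  induction hn : s.ncard using Nat.strong_induction_on generalizing s L with
  | _ n ih =>
  subst hn
  rcases L.eq_empty_or_nonempty with rfl | hLne
  · simp
  have hLfin : L.Finite := hs.finite_subsets.subset hsub
  obtain ⟨M, hM⟩ := hLfin.exists_minimal hLne
  obtain ⟨x, hx⟩ := (hnt M hM.prop).nonempty
  have : Finite s := hs.to_subtype
  have hs2 : 1 < s.ncard :=
    Set.one_lt_ncard_iff_nontrivial.2 ((hnt M hM.prop).mono (hsub M hM.prop))
  have hinj := injOn_sdiff_singleton_of_minimal hL hnt hM hx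
  have key : ((· \ {x}) '' (L \ {M})).ncard ≤ (s \ {x}).ncard - 1 := by
    refine ih _ ?_ (hs.sdiff) ?_ ?_ ?_ rfl
    · rw [Set.ncard_sdiff_singleton_of_mem (hsub M hM.prop hx)]
      omega
    · exact hinj.pairwise_image.2 fun A hA B hB hAB =>
        (hL hA.1 hB.1 fun h => hAB (h ▸ rfl)).sdiff _
    · rintro _ ⟨A, hA, rfl⟩
      exact Set.sdiff_subset_sdiff_left (hsub A hA.1)
    · rintro _ ⟨A, hA, rfl⟩
      exact nontrivial_sdiff_singleton_of_minimal hL hnt hM hx hA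
  rw [hinj.ncard_image, Set.ncard_sdiff_singleton_of_mem hM.prop,
    Set.ncard_sdiff_singleton_of_mem (hsub M hM.prop hx)] at key
  have := (Set.ncard_pos hLfin).2 hLne
  omega

theorem ncard_le_ncard_sep_subsingleton_add_ncard_sep_nontrivial (hL : L.Finite) :
    L.ncard ≤ {A ∈ L | A.Subsingleton}.ncard + {A ∈ L | A.Nontrivial}.ncard := by
  refine (Set.ncard_le_ncard (fun A hA => ?_) ?_).trans (Set.ncard_union_le _ _)
  · exact A.subsingleton_or_nontrivial.imp (⟨hA, ·⟩) (⟨hA, ·⟩)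
  · exact hL.subset (Set.union_subset (Set.sep_subset _ _) (Set.sep_subset _ _))

theorem ncard_le_of_pairwise_compat (hs : s.Finite) (hL : L.Pairwise Compat)
    (hsub : ∀ A ∈ L, A ⊆ s) (hne : ∀ A ∈ L, A.Nonempty) :
    L.ncard ≤ s.ncard + (s.ncard - 1) := by
  have hLfin : L.Finite := hs.finite_subsets.subset hsub
  have hsingletons : {A ∈ L | A.Subsingleton} ⊆ (fun a => {a}) '' s := by
    rintro A ⟨hA, hAs⟩
    obtain ⟨a, ha⟩ := hne A hA
    exact ⟨a, hsub A hA ha, (hAs.eq_singleton_of_mem ha).symm⟩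
  calc L.ncard ≤ {A ∈ L | A.Subsingleton}.ncard + {A ∈ L | A.Nontrivial}.ncard :=
        ncard_le_ncard_sep_subsingleton_add_ncard_sep_nontrivial hLfin
    _ ≤ s.ncard + (s.ncard - 1) := by
        gcongr
        · exact (Set.ncard_le_ncard hsingletons (hs.image _)).trans (Set.ncard_image_le hs)
        · exact ncard_le_ncard_sub_one_of_pairwise_compat hs (hL.mono (Set.sep_subset _ _))
            (fun A hA => hsub A hA.1) fun A hA => hA.2

end Laminar

namespace IGComponent

variable {X : Type*} {C : Set (Set X)} {c d f g : Set X}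

theorem self_mem (hc : c ∈ C) : c ∈ IGComponent C c := ⟨hc, .refl⟩

theorem mem_of_not_compat (hf : f ∈ IGComponent C c) (hg : g ∈ C) (hfg : ¬ Compat f g) :
    g ∈ IGComponent C c :=
  ⟨hg, hf.2.tail ⟨hf.1, hg, hfg⟩⟩

theorem eq_of_mem (hd : d ∈ IGComponent C c) : IGComponent C d = IGComponent C c := by
  have : Std.Symm fun a b : Set X => a ∈ C ∧ b ∈ C ∧ ¬ Compat a b :=
    ⟨fun _ _ h => ⟨h.2.1, h.1, fun h' => h.2.2 h'.symm⟩⟩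
  ext e
  exact ⟨fun he => ⟨he.1, hd.2.trans he.2⟩,
    fun he => ⟨he.1, (Std.Symm.symm _ _ hd.2).trans he.2⟩⟩

theorem compat_of_ne (h : IGComponent C c ≠ IGComponent C d) (hf : f ∈ IGComponent C c)
    (hg : g ∈ IGComponent C d) : Compat f g := by
  by_contra hfg
  exact h.symm ((eq_of_mem hg).symm.trans (eq_of_mem (mem_of_not_compat hf hg.1 hfg)))

theorem forall_mem_of_not_compat_imp {P : Set X → Prop}
    (hP : ∀ a ∈ IGComponent C c, ∀ b ∈ C, ¬ Compat a b → P a → P b)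
    (hd : d ∈ IGComponent C c) (hPd : P d) : ∀ e ∈ IGComponent C c, P e := by
  intro e he
  rw [← eq_of_mem hd] at hP he
  obtain ⟨-, hde⟩ := he
  induction hde with
  | refl => exact hPd
  | tail hdb hab ih => exact hP _ ⟨hab.1, hdb⟩ _ hab.2.1 hab.2.2 ih

theorem exists_not_compat (hK : (IGComponent C c).Nontrivial) (hg : g ∈ IGComponent C c) :
    ∃ b ∈ IGComponent C c, ¬ Compat g b := by
  obtain ⟨b, hb, hbg⟩ := hK.exists_ne g
  rw [← eq_of_mem hg] at hb ⊢
  rcases hb.2.cases_head with h | ⟨b', hgb', -⟩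
  · exact absurd h.symm hbg
  · exact ⟨b', mem_of_not_compat (self_mem hgb'.1) hgb'.2.1 hgb'.2.2, hgb'.2.2⟩

theorem sUnion_subset_of_forall_compat (hcomp : ∀ f ∈ IGComponent C c, Compat g f)
    (hf : f ∈ IGComponent C c) (hfg : f ⊆ g) : ⋃₀ IGComponent C c ⊆ g := by
  refine Set.sUnion_subset (forall_mem_of_not_compat_imp (P := (· ⊆ g)) ?_ hf hfg)
  intro a ha b hb hab hag
  obtain ⟨hab', hnab, -⟩ := not_compat_iff.mp hab
  rcases hcomp b (mem_of_not_compat ha hb hab) with h | h | h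
  · exact (hab'.ne_empty (Set.subset_empty_iff.mp (h ▸ Set.inter_subset_inter_left b hag))).elim
  · exact absurd (hag.trans h) hnab
  · exact h

theorem compat_sUnion_of_forall_compat (hcomp : ∀ f ∈ IGComponent C c, Compat g f) :
    Compat g (⋃₀ IGComponent C c) := by
  by_cases hsub : ∃ f ∈ IGComponent C c, f ⊆ g
  · obtain ⟨f, hf, hfg⟩ := hsub
    exact Or.inr (Or.inr (sUnion_subset_of_forall_compat hcomp hf hfg))
  by_cases hsup : ∃ f ∈ IGComponent C c, g ⊆ f
  · obtain ⟨f, hf, hgf⟩ := hsup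
    exact Or.inr (Or.inl (hgf.trans (Set.subset_sUnion_of_mem hf)))
  push Not at hsub hsup
  refine Or.inl (Set.eq_empty_of_forall_notMem ?_)
  rintro x ⟨hxg, f, hf, hxf⟩
  rcases hcomp f hf with h | h | h
  · exact h.subset ⟨hxg, hxf⟩
  · exact hsup f hf h
  · exact hsub f hf h

theorem compat_sUnion_of_ne (h : IGComponent C c ≠ IGComponent C d) :
    Compat (⋃₀ IGComponent C c) (⋃₀ IGComponent C d) :=
  compat_sUnion_of_forall_compat fun _ hg =>
    (compat_sUnion_of_forall_compat fun _ hf => (compat_of_ne h hf hg).symm).symm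

theorem exists_ssuperset_of_sUnion_eq (hne : ∀ a ∈ C, a.Nonempty)
    (hK : (IGComponent C d).Nontrivial) (h : IGComponent C c ≠ IGComponent C d)
    (hU : ⋃₀ IGComponent C c = ⋃₀ IGComponent C d) (hg : g ∈ IGComponent C d) :
    ∃ f ∈ IGComponent C c, g ⊂ f := by
  have hcomp : ∀ f ∈ IGComponent C c, Compat g f := fun f hf => (compat_of_ne h hf hg).symm
  obtain ⟨b, hb, hgb⟩ := exists_not_compat hK hg
  obtain ⟨x, hxg⟩ := hne g hg.1
  obtain ⟨f, hf, hxf⟩ : x ∈ ⋃₀ IGComponent C c := hU ▸ Set.subset_sUnion_of_mem hg hxg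
  have hfg : ¬ f ⊆ g := fun hfg => hgb <| Or.inr <| Or.inr <|
    (Set.subset_sUnion_of_mem hb).trans (hU ▸ sUnion_subset_of_forall_compat hcomp hf hfg)
  have hgf : g ≠ f := by
    rintro rfl
    exact h ((eq_of_mem hf).symm.trans (eq_of_mem hg))
  rcases hcomp f hf with h' | h' | h'
  · exact (h'.subset ⟨hxg, hxf⟩).elim
  · exact ⟨f, hf, h'.ssubset_of_ne hgf⟩
  · exact absurd h' hfg

theorem eq_of_sUnion_eq [Finite X] (hne : ∀ a ∈ C, a.Nonempty)
    (hc : (IGComponent C c).Nontrivial) (hd : (IGComponent C d).Nontrivial)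
    (hU : ⋃₀ IGComponent C c = ⋃₀ IGComponent C d) : IGComponent C c = IGComponent C d := by
  by_contra h
  obtain ⟨m, hm⟩ := (IGComponent C c ∪ IGComponent C d).toFinite.exists_maximal
    (hc.nonempty.mono Set.subset_union_left)
  rcases hm.prop with hmc | hmd
  · obtain ⟨f, hf, hmf⟩ := exists_ssuperset_of_sUnion_eq hne hc (Ne.symm h) hU.symm hmc
    exact hm.not_gt (Or.inr hf) hmf
  · obtain ⟨f, hf, hmf⟩ := exists_ssuperset_of_sUnion_eq hne hd h hU hmd
    exact hm.not_gt (Or.inl hf) hmf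

theorem nontrivial_sUnion (hK : (IGComponent C c).Nontrivial) :
    (⋃₀ IGComponent C c).Nontrivial := by
  obtain ⟨g, hg⟩ := hK.nonempty
  obtain ⟨b, hb, hgb⟩ := exists_not_compat hK hg
  obtain ⟨-, hgb, hbg⟩ := not_compat_iff.mp hgb
  obtain ⟨x, hxg, hxb⟩ := Set.not_subset.mp hgb
  obtain ⟨y, hyb, hyg⟩ := Set.not_subset.mp hbg
  exact ⟨x, Set.subset_sUnion_of_mem hg hxg, y, Set.subset_sUnion_of_mem hb hyb,
    fun hxy => hxb (hxy ▸ hyb)⟩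

end IGComponent

section Components

variable {X : Type*} {C : Set (Set X)}

def IGComponents (C : Set (Set X)) : Set (Set (Set X)) := {K | ∃ c ∈ C, K = IGComponent C c}

theorem pairwise_compat_sUnion_IGComponents :
    (IGComponents C).Pairwise (Function.onFun Compat Set.sUnion) := by
  rintro _ ⟨c, -, rfl⟩ _ ⟨d, -, rfl⟩ h
  exact IGComponent.compat_sUnion_of_ne h

theorem ncard_subsingleton_IGComponents_le [Finite X] (hne : ∀ c ∈ C, c.Nonempty) :
    {K ∈ IGComponents C | K.Subsingleton}.ncard ≤ Nat.card X + (Nat.card X - 1) := by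
  have hsingleton : ∀ K ∈ {K ∈ IGComponents C | K.Subsingleton}, ∃ c ∈ C, K = {c} := by
    rintro _ ⟨⟨c, hc, rfl⟩, hK⟩
    exact ⟨c, hc, hK.eq_singleton_of_mem (IGComponent.self_mem hc)⟩
  have hinj : {K ∈ IGComponents C | K.Subsingleton}.InjOn Set.sUnion := by
    intro K hK K' hK' h
    obtain ⟨c, -, rfl⟩ := hsingleton K hK
    obtain ⟨c', -, rfl⟩ := hsingleton K' hK'
    simp_all only [Set.sUnion_singleton]
  rw [← hinj.ncard_image, ← Set.ncard_univ]
  refine ncard_le_of_pairwise_compat Set.finite_univ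
    (hinj.pairwise_image.2 (pairwise_compat_sUnion_IGComponents.mono (Set.sep_subset _ _)))
    (fun _ _ => Set.subset_univ _) ?_
  rintro _ ⟨K, hK, rfl⟩
  obtain ⟨c, hc, rfl⟩ := hsingleton K hK
  simpa using hne c hc

theorem ncard_nontrivial_IGComponents_le [Finite X] (hne : ∀ c ∈ C, c.Nonempty) :
    {K ∈ IGComponents C | K.Nontrivial}.ncard ≤ Nat.card X - 1 := by
  have hinj : {K ∈ IGComponents C | K.Nontrivial}.InjOn Set.sUnion := by
    rintro _ ⟨⟨c, -, rfl⟩, hc⟩ _ ⟨⟨d, -, rfl⟩, hd⟩ h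
    exact IGComponent.eq_of_sUnion_eq hne hc hd h
  rw [← hinj.ncard_image, ← Set.ncard_univ]
  refine ncard_le_ncard_sub_one_of_pairwise_compat Set.finite_univ
    (hinj.pairwise_image.2 (pairwise_compat_sUnion_IGComponents.mono (Set.sep_subset _ _)))
    (fun _ _ => Set.subset_univ _) ?_
  rintro _ ⟨_, ⟨⟨c, -, rfl⟩, hc⟩, rfl⟩
  exact IGComponent.nontrivial_sUnion hc

end Components

/-- For a set `C` of clusters on a taxon set `X` with `|X| = n ≥ 2`, the
incompatibility graph `IG(C)` has at most `4 * (n - 1)` connected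
components. -/
theorem stmt14 {X : Type*} [Fintype X] (C : Set (Set X)) (n : ℕ)
    (hcl : ∀ c ∈ C, c.Nonempty ∧ c ≠ Set.univ)
    (hn : Fintype.card X = n) (hn2 : 2 ≤ n) :
    {K : Set (Set X) | ∃ c ∈ C, K = IGComponent C c}.ncard ≤ 4 * (n - 1) := by
  have hne : ∀ c ∈ C, c.Nonempty := fun c hc => (hcl c hc).1
  rw [← hn, ← Nat.card_eq_fintype_card] at hn2 ⊢
  calc (IGComponents C).ncard
      ≤ {K ∈ IGComponents C | K.Subsingleton}.ncard + {K ∈ IGComponents C | K.Nontrivial}.ncard :=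
        ncard_le_ncard_sep_subsingleton_add_ncard_sep_nontrivial (Set.toFinite _)
    _ ≤ (Nat.card X + (Nat.card X - 1)) + (Nat.card X - 1) :=
        add_le_add (ncard_subsingleton_IGComponents_le hne) (ncard_nontrivial_IGComponents_le hne)
    _ ≤ 4 * (Nat.card X - 1) := by omega
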